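/- Let k be a field of characteristic zero, N > 1, q ∈ k a primitive N-th root of unity, and A a k-algebra with an element x such that x^N = 0. Then exp_q(x) is invertible in A, with two-sided inverse ∑_{n=0}^{N−1} ((−1)^n q^{n(n−1)/2}/(n)!_q) · x^n. -/

import Mathlib

/-- The q-integer `(n)_q = 1 + q + ⋯ + q^{n-1}`. -/
def qNat {k : Type*} [Field k] (q : k) (n : ℕ) : k :=
  ∑ i ∈ Finset.range n, q ^ i

/-- The q-factorial `(n)!_q = (1)_q (2)_q ⋯ (n)_q`, with `(0)!_q = 1`. -/
def qFact {k : Type*} [Field k] (q : k) (n : ℕ) : k :=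
  ∏ i ∈ Finset.range n, qNat q (i + 1)

/-- The truncated q-exponential `exp_q(z) = ∑_{n=0}^{N-1} (1/(n)!_q) · z^n`. -/
noncomputable def qExp {k A : Type*} [Field k] [Ring A] [Algebra k A]
    (q : k) (N : ℕ) (z : A) : A :=
  ∑ n ∈ Finset.range N, (qFact q n)⁻¹ • z ^ n

/-!
Both sums are evaluations at `x` of the truncations of power series `F = ∑ zⁿ/(n)!_q` and
`G = ∑ (-1)ⁿ q^{n(n-1)/2} zⁿ/(n)!_q`, so it suffices that `F G ≡ 1` modulo `z^N`, i.e. that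
`∑_{i+j=n} G_j/(i)!_q = 0` for `0 < n < N`. Multiplying this sum by `(n)_q = (j)_q + q^j (i)_q`
and using `(m)_q/(m)!_q = 1/(m-1)!_q` splits it into two sums over `i + j = n - 1` that cancel.
-/

open Finset Polynomial

section TruncatedProduct

variable {k A : Type*} [CommRing k] [Ring A] [Algebra k A]

lemma aeval_sum_range_monomial (f : ℕ → k) (N : ℕ) (x : A) :
    aeval x (∑ n ∈ range N, monomial n (f n)) = ∑ n ∈ range N, f n • x ^ n := by
  simp only [map_sum, aeval_monomial, Algebra.smul_def]

lemma coeff_sum_range_monomial_of_lt (f : ℕ → k) {N m : ℕ} (hm : m < N) :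
    (∑ n ∈ range N, monomial n (f n)).coeff m = f m := by
  simp [finsetSum_coeff, coeff_monomial, hm]

theorem sum_range_smul_pow_mul_eq_one {N : ℕ} {f g : ℕ → k}
    (hfg : ∀ n < N, ∑ p ∈ antidiagonal n, f p.1 * g p.2 = if n = 0 then 1 else 0)
    {x : A} (hx : x ^ N = 0) :
    (∑ n ∈ range N, f n • x ^ n) * (∑ n ∈ range N, g n • x ^ n) = 1 := by
  set P := ∑ n ∈ range N, monomial n (f n)
  set Q := ∑ n ∈ range N, monomial n (g n)
  obtain ⟨R, hR⟩ : X ^ N ∣ P * Q - 1 := by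
    refine X_pow_dvd_iff.mpr fun n hn => ?_
    rw [coeff_sub, coeff_mul, coeff_one, ← hfg n hn, sub_eq_zero]
    refine sum_congr rfl fun p hp => ?_
    rw [coeff_sum_range_monomial_of_lt f ((HasAntidiagonal.antidiagonal.fst_le hp).trans_lt hn),
      coeff_sum_range_monomial_of_lt g ((HasAntidiagonal.antidiagonal.snd_le hp).trans_lt hn)]
  rw [← aeval_sum_range_monomial, ← aeval_sum_range_monomial, ← map_mul,
    sub_eq_iff_eq_add.mp hR]
  simp [hx]

end TruncatedProduct

section QCalculus

variable {k : Type*} [Field k]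

@[simp] lemma qNat_zero (q : k) : qNat q 0 = 0 := sum_range_zero _

lemma qNat_add (q : k) (a b : ℕ) : qNat q (a + b) = qNat q a + q ^ a * qNat q b := by
  simp only [qNat, sum_range_add, mul_sum, pow_add]

@[simp] lemma qFact_zero (q : k) : qFact q 0 = 1 := prod_range_zero _

lemma qFact_succ (q : k) (n : ℕ) : qFact q (n + 1) = qFact q n * qNat q (n + 1) :=
  prod_range_succ _ _

lemma IsPrimitiveRoot.qNat_ne_zero {q : k} {N n : ℕ} (hq : IsPrimitiveRoot q N)
    (hn0 : 0 < n) (hnN : n < N) : qNat q n ≠ 0 := by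
  have hq1 : q ≠ 1 := hq.ne_one (by omega)
  rw [qNat, geom_sum_eq hq1]
  exact div_ne_zero (sub_ne_zero.mpr (hq.pow_ne_one_of_pos_of_lt hn0.ne' hnN))
    (sub_ne_zero.mpr hq1)

lemma qNat_mul_inv_qFact_succ {q : k} {n : ℕ} (h : qNat q (n + 1) ≠ 0) :
    qNat q (n + 1) * (qFact q (n + 1))⁻¹ = (qFact q n)⁻¹ := by
  rw [qFact_succ, mul_inv, mul_left_comm, mul_inv_cancel₀ h, mul_one]

def qExpInvCoeff (q : k) (n : ℕ) : k :=
  (-1) ^ n * q ^ (n * (n - 1) / 2) / qFact q n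

lemma qNat_mul_qExpInvCoeff_succ {q : k} {n : ℕ} (h : qNat q (n + 1) ≠ 0) :
    qNat q (n + 1) * qExpInvCoeff q (n + 1) = -(q ^ n * qExpInvCoeff q n) := by
  have hexp : (n + 1) * (n + 1 - 1) / 2 = n * (n - 1) / 2 + n := by
    rw [← Nat.choose_two_right, ← Nat.choose_two_right, Nat.choose_succ_succ',
      Nat.choose_one_right, add_comm]
  simp only [qExpInvCoeff, div_eq_mul_inv, ← qNat_mul_inv_qFact_succ h, hexp, pow_add, pow_succ]
  ring

theorem sum_antidiagonal_inv_qFact_mul_qExpInvCoeff {q : k} {N n : ℕ}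
    (hq : IsPrimitiveRoot q N) (hn : n < N) :
    ∑ p ∈ antidiagonal n, (qFact q p.1)⁻¹ * qExpInvCoeff q p.2 = if n = 0 then 1 else 0 := by
  rcases n with _ | s
  · simp [qExpInvCoeff]
  rw [if_neg s.succ_ne_zero]
  have hne : ∀ m ≤ s, qNat q (m + 1) ≠ 0 := fun m hm => hq.qNat_ne_zero m.succ_pos (by omega)
  refine (mul_eq_zero.mp ?_).resolve_left (hne s le_rfl)
  calc qNat q (s + 1) * ∑ p ∈ antidiagonal (s + 1), (qFact q p.1)⁻¹ * qExpInvCoeff q p.2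
      = ∑ p ∈ antidiagonal (s + 1), (qFact q p.1)⁻¹ * (qNat q p.2 * qExpInvCoeff q p.2)
        + ∑ p ∈ antidiagonal (s + 1),
          q ^ p.2 * (qNat q p.1 * (qFact q p.1)⁻¹) * qExpInvCoeff q p.2 := by
        rw [mul_sum, ← sum_add_distrib]
        refine sum_congr rfl fun p hp => ?_
        rw [← mem_antidiagonal.mp hp, add_comm p.1, qNat_add]
        ring
    _ = ∑ p ∈ antidiagonal s, -(q ^ p.2 * ((qFact q p.1)⁻¹ * qExpInvCoeff q p.2))
        + ∑ p ∈ antidiagonal s, q ^ p.2 * ((qFact q p.1)⁻¹ * qExpInvCoeff q p.2) := by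
        rw [Nat.sum_antidiagonal_succ', Nat.sum_antidiagonal_succ]
        simp only [qNat_zero, zero_mul, mul_zero, zero_add]
        congr 1 <;> refine sum_congr rfl fun p hp => ?_
        · rw [qNat_mul_qExpInvCoeff_succ (hne _ (HasAntidiagonal.antidiagonal.snd_le hp))]
          ring
        · rw [qNat_mul_inv_qFact_succ (hne _ (HasAntidiagonal.antidiagonal.fst_le hp))]
          ring
    _ = 0 := by rw [sum_neg_distrib, neg_add_cancel]

end QCalculus

theorem stmt_3_general {k A : Type*} [Field k] [Ring A] [Algebra k A]
    (N : ℕ) (q : k) (hq : IsPrimitiveRoot q N)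
    (x : A) (hx : x ^ N = 0) :
    qExp q N x * (∑ n ∈ Finset.range N,
        ((-1 : k) ^ n * q ^ (n * (n - 1) / 2) / qFact q n) • x ^ n) = 1 ∧
    (∑ n ∈ Finset.range N,
        ((-1 : k) ^ n * q ^ (n * (n - 1) / 2) / qFact q n) • x ^ n) * qExp q N x = 1 := by
  have hconv := fun n (hn : n < N) => sum_antidiagonal_inv_qFact_mul_qExpInvCoeff hq hn
  refine ⟨sum_range_smul_pow_mul_eq_one hconv hx, sum_range_smul_pow_mul_eq_one ?_ hx⟩
  intro n hn
  rw [← Nat.sum_antidiagonal_swap, ← hconv n hn]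
  exact sum_congr rfl fun p _ => mul_comm _ _

/-- If `x^N = 0` then `exp_q(x)` is invertible with two-sided inverse
`∑_{n=0}^{N-1} ((-1)^n q^{n(n-1)/2}/(n)!_q) · x^n`. -/
theorem stmt_3 {k A : Type*} [Field k] [CharZero k] [Ring A] [Algebra k A]
    (N : ℕ) (hN : 1 < N) (q : k) (hq : IsPrimitiveRoot q N)
    (x : A) (hx : x ^ N = 0) :
    qExp q N x * (∑ n ∈ Finset.range N,
        ((-1 : k) ^ n * q ^ (n * (n - 1) / 2) / qFact q n) • x ^ n) = 1 ∧
    (∑ n ∈ Finset.range N,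
        ((-1 : k) ^ n * q ^ (n * (n - 1) / 2) / qFact q n) • x ^ n) * qExp q N x = 1 :=
  stmt_3_general N q hq x hx
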